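/- Let π : A → L(E) be a G-equivariant representation of a G-algebra A on a G-Hilbert B-module (E,W). Then the crossed-product action (f·ξ)(u) := ∫ π_{r(v)}(f(v)) W_v(ξ(v⁻¹u)) dλ^{r(u)}(v) is *-compatible with the convolution involution: ⟨f·ξ, ξ'⟩_G = ⟨ξ, f*·ξ'⟩_G for all f ∈ Γ_c(G;r*𝔄) and ξ, ξ' ∈ Γ_c(G;r*𝔈). -/

import Mathlib

open MeasureTheory
open scoped Classical

/-- A groupoid dynamical system `(𝔄, G, α)` over a locally compact, second countable,
locally Hausdorff groupoid `G` with Haar system `{λˣ}`: the algebraic and topological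
groupoid structure, an upper-semicontinuous C*-bundle over the unit space `G⁰ ⊆ G`
(recorded as the family of fibres `A x`, with the bundle topology on the total space
given by the instance on `(x : G) × A x`), a continuous action of `G` by fibrewise
*-isomorphisms `α_u : A (s u) → A (r u)` with `α_{uv} = α_u ∘ α_v`, and a Haar system. -/
structure DynSys (G : Type) [TopologicalSpace G] [MeasurableSpace G]
    (A : G → Type) [∀ x, NonUnitalNormedRing (A x)] [∀ x, StarRing (A x)]
    [∀ x, CStarRing (A x)] [∀ x, NormedSpace ℂ (A x)] [∀ x, CompleteSpace (A x)]
    [TopologicalSpace ((x : G) × A x)] : Type 1 where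
  -- the algebraic groupoid structure
  isUnit : G → Prop
  r : G → G
  s : G → G
  r_isUnit : ∀ u, isUnit (r u)
  s_isUnit : ∀ u, isUnit (s u)
  r_of_isUnit : ∀ u, isUnit u → r u = u
  s_of_isUnit : ∀ u, isUnit u → s u = u
  mul : (u v : G) → s u = r v → G
  inv : G → G
  inv_inv : ∀ u, inv (inv u) = u
  r_inv : ∀ u, r (inv u) = s u
  s_inv : ∀ u, s (inv u) = r u
  r_mul : ∀ u v h, r (mul u v h) = r u
  s_mul : ∀ u v h, s (mul u v h) = s v
  mul_assoc : ∀ u v w (h₁ : s u = r v) (h₂ : s v = r w),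
    mul (mul u v h₁) w (by rw [s_mul]; exact h₂)
      = mul u (mul v w h₂) (by rw [r_mul]; exact h₁)
  mul_unit_right : ∀ u, mul u (s u) (by rw [r_of_isUnit (s u) (s_isUnit u)]) = u
  mul_unit_left : ∀ u, mul (r u) u (by rw [s_of_isUnit (r u) (r_isUnit u)]) = u
  mul_inv : ∀ u, mul u (inv u) (r_inv u).symm = r u
  inv_mul : ∀ u, mul (inv u) u (s_inv u) = s u
  -- the topological structure: G locally compact, second countable, locally Hausdorff,
  -- with Hausdorff locally compact unit space
  locallyCompact : LocallyCompactSpace G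
  secondCountable : SecondCountableTopology G
  locallyHausdorff : ∀ u : G, ∃ V : Set G, u ∈ V ∧ IsOpen V ∧ T2Space ↥V
  unitSpace_t2 : T2Space {x : G // isUnit x}
  continuous_r : Continuous r
  continuous_s : Continuous s
  isOpenMap_r : IsOpenMap r
  isOpenMap_s : IsOpenMap s
  continuous_inv : Continuous inv
  continuous_mul : Continuous fun q : {q : G × G // s q.1 = r q.2} => mul q.1.1 q.1.2 q.2
  borel : BorelSpace G
  -- the action of G on the C*-bundle by fibrewise *-isomorphisms
  act : (u : G) → A (s u) → A (r u)
  act_add : ∀ u a b, act u (a + b) = act u a + act u b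
  act_smul : ∀ u (c : ℂ) a, act u (c • a) = c • act u a
  act_mul : ∀ u a b, act u (a * b) = act u a * act u b
  act_star : ∀ u a, act u (star a) = star (act u a)
  act_norm : ∀ u a, ‖act u a‖ = ‖a‖
  act_comp : ∀ u v (h : s u = r v) (a : A (s v)),
    cast (congrArg A (r_mul u v h)) (act (mul u v h) (cast (congrArg A (s_mul u v h).symm) a))
      = act u (cast (congrArg A h.symm) (act v a))
  act_unit : ∀ (u : G) (a : A (s (s u))),
    act (s u) a = cast (congrArg A ((s_of_isUnit (s u) (s_isUnit u)).trans
      (r_of_isUnit (s u) (s_isUnit u)).symm)) a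
  continuous_act : Continuous fun q : {q : G × ((x : G) × A x) // q.2.1 = s q.1} =>
    (⟨r q.1.1, act q.1.1 (cast (congrArg A q.2) q.1.2.2)⟩ : (x : G) × A x)
  -- the Haar system
  haar : G → Measure G
  haar_supported : ∀ x, isUnit x → haar x {u | r u ≠ x} = 0
  haar_finiteOnCompacts : ∀ x, IsFiniteMeasureOnCompacts (haar x)
  haar_left_invariant : ∀ (v : G) (f : G → A (r v)),
    (∫ u, (if h : s v = r u then f (mul v u h) else 0) ∂(haar (s v)))
      = ∫ u, f u ∂(haar (r v))
  haar_continuous : ∀ f : G → ℝ, Continuous f → HasCompactSupport f →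
    Continuous fun x => ∫ u, f u ∂(haar x)

namespace DynSys

variable {G : Type} [TopologicalSpace G] [MeasurableSpace G]
  {A : G → Type} [∀ x, NonUnitalNormedRing (A x)] [∀ x, StarRing (A x)]
  [∀ x, CStarRing (A x)] [∀ x, NormedSpace ℂ (A x)] [∀ x, CompleteSpace (A x)]
  [TopologicalSpace ((x : G) × A x)]
  (S : DynSys G A)

/-- Transport along an equality of base points. -/
def cA {x y : G} (h : x = y) (a : A x) : A y := cast (congrArg A h) a

/-- The convolution product
`f * g (u) = ∫_G f(v) α_v(g(v⁻¹u)) dλ^{r(u)}(v)` on sections of `r*𝔄`. -/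
noncomputable def conv (f g : (u : G) → A (S.r u)) : (u : G) → A (S.r u) :=
  fun u => ∫ v, (if h : S.r v = S.r u then
      cA h (f v * S.act v (cA ((S.r_mul (S.inv v) u ((S.s_inv v).trans h)).trans (S.r_inv v))
        (g (S.mul (S.inv v) u ((S.s_inv v).trans h)))))
    else 0) ∂(S.haar (S.r u))

/-- The involution `f^*(u) = α_u(f(u⁻¹)^*)` on sections of `r*𝔄`. -/
def starSec (f : (u : G) → A (S.r u)) : (u : G) → A (S.r u) :=
  fun u => S.act u (cA (S.r_inv u) (star (f (S.inv u))))

/-- A compactly supported continuous section of `r*𝔄` over a Hausdorff open subset of `G`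
(extended by zero). -/
def IsCcPiece (f : (u : G) → A (S.r u)) : Prop :=
  ∃ V : Set G, IsOpen V ∧ T2Space ↥V ∧
    ContinuousOn (fun u => (⟨S.r u, f u⟩ : (x : G) × A x)) V ∧
    ∃ K : Set G, K ⊆ V ∧ IsCompact K ∧ ∀ u ∉ K, f u = 0

/-- Membership in `Γ_c(G; r*𝔄)`: the span of compactly supported continuous sections over
Hausdorff open subsets of `G`. -/
def MemCc (f : (u : G) → A (S.r u)) : Prop :=
  ∃ (n : ℕ) (g : Fin n → ((u : G) → A (S.r u))),
    (∀ i, S.IsCcPiece (g i)) ∧ ∀ u, f u = ∑ i, g i u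

end DynSys

open DynSys

/-- A `G`-Hilbert `B`-module over the groupoid dynamical system `S`, realised fibrewise:
an upper-semicontinuous bundle of Hilbert `A x`-modules `E x` over the unit space, with
right actions `mo`, `A x`-valued inner products `innerE`, and a continuous action of `G`
by isometric isomorphisms `W_u : E (s u) → E (r u)` compatible with `α`. -/
structure GHilb {G : Type} [TopologicalSpace G] [MeasurableSpace G]
    {A : G → Type} [∀ x, NonUnitalNormedRing (A x)] [∀ x, StarRing (A x)]
    [∀ x, CStarRing (A x)] [∀ x, NormedSpace ℂ (A x)] [∀ x, CompleteSpace (A x)]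
    [TopologicalSpace ((x : G) × A x)]
    (S : DynSys G A)
    (E : G → Type) [∀ x, NormedAddCommGroup (E x)] [∀ x, NormedSpace ℂ (E x)]
    [∀ x, CompleteSpace (E x)] [TopologicalSpace ((x : G) × E x)] : Type 1 where
  mo : ∀ x, E x → A x → E x
  mo_add_left : ∀ x e f a, mo x (e + f) a = mo x e a + mo x f a
  mo_add_right : ∀ x e a b, mo x e (a + b) = mo x e a + mo x e b
  mo_mul : ∀ x e a b, mo x (mo x e a) b = mo x e (a * b)
  mo_smul : ∀ x (c : ℂ) e a, mo x (c • e) a = c • mo x e a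
  innerE : ∀ x, E x → E x → A x
  innerE_star : ∀ x e f, star (innerE x e f) = innerE x f e
  innerE_add_right : ∀ x e f g, innerE x e (f + g) = innerE x e f + innerE x e g
  innerE_smul_right : ∀ x (c : ℂ) e f, innerE x e (c • f) = c • innerE x e f
  innerE_mo_right : ∀ x e f a, innerE x e (mo x f a) = innerE x e f * a
  innerE_norm : ∀ x e, ‖innerE x e e‖ = ‖e‖ ^ 2
  W : (u : G) → E (S.s u) → E (S.r u)
  W_add : ∀ u e f, W u (e + f) = W u e + W u f
  W_smul : ∀ u (c : ℂ) e, W u (c • e) = c • W u e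
  W_isom : ∀ u e, ‖W u e‖ = ‖e‖
  W_inner : ∀ u e f, innerE (S.r u) (W u e) (W u f) = S.act u (innerE (S.s u) e f)
  W_mo : ∀ u e a, W u (mo (S.s u) e a) = mo (S.r u) (W u e) (S.act u a)
  W_comp : ∀ u v (h : S.s u = S.r v) (e : E (S.s v)),
    cast (congrArg E (S.r_mul u v h))
        (W (S.mul u v h) (cast (congrArg E (S.s_mul u v h).symm) e))
      = W u (cast (congrArg E h.symm) (W v e))
  W_unit : ∀ (u : G) (e : E (S.s (S.s u))),
    W (S.s u) e = cast (congrArg E ((S.s_of_isUnit (S.s u) (S.s_isUnit u)).trans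
      (S.r_of_isUnit (S.s u) (S.s_isUnit u)).symm)) e
  continuous_W : Continuous fun q : {q : G × ((x : G) × E x) // q.2.1 = S.s q.1} =>
    (⟨S.r q.1.1, W q.1.1 (cast (congrArg E q.2) q.1.2.2)⟩ : (x : G) × E x)

namespace GHilb

variable {G : Type} [TopologicalSpace G] [MeasurableSpace G]
  {A : G → Type} [∀ x, NonUnitalNormedRing (A x)] [∀ x, StarRing (A x)]
  [∀ x, CStarRing (A x)] [∀ x, NormedSpace ℂ (A x)] [∀ x, CompleteSpace (A x)]
  [TopologicalSpace ((x : G) × A x)]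
  {S : DynSys G A}
  {E : G → Type} [∀ x, NormedAddCommGroup (E x)] [∀ x, NormedSpace ℂ (E x)]
  [∀ x, CompleteSpace (E x)] [TopologicalSpace ((x : G) × E x)]
  (H : GHilb S E)

/-- Transport along an equality of base points. -/
def cE {x y : G} (h : x = y) (e : E x) : E y := cast (congrArg E h) e

/-- The `Γ_c(G; r*𝔅)`-valued inner product
`⟨ξ,ξ'⟩_G(u) = ∫ β_v(⟨ξ(v⁻¹), ξ'(v⁻¹u)⟩_{s(v)}) dλ^{r(u)}(v)` on `Γ_c(G; r*𝔈)`. -/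
noncomputable def innerG (ξ ξ' : (u : G) → E (S.r u)) : (u : G) → A (S.r u) :=
  fun u => ∫ v, (if h : S.r v = S.r u then
      cA h (S.act v (H.innerE (S.s v) (cE (S.r_inv v) (ξ (S.inv v)))
        (cE ((S.r_mul (S.inv v) u ((S.s_inv v).trans h)).trans (S.r_inv v))
          (ξ' (S.mul (S.inv v) u ((S.s_inv v).trans h))))))
    else 0) ∂(S.haar (S.r u))

/-- Membership in `Γ_c(G; r*𝔈)`. -/
def MemCcE (ξ : (u : G) → E (S.r u)) : Prop :=
  ∃ (n : ℕ) (g : Fin n → ((u : G) → E (S.r u))),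
    (∀ i, ∃ V : Set G, IsOpen V ∧ T2Space ↥V ∧
      ContinuousOn (fun u => (⟨S.r u, g i u⟩ : (x : G) × E x)) V ∧
      ∃ K : Set G, K ⊆ V ∧ IsCompact K ∧ ∀ u ∉ K, g i u = 0) ∧
    ∀ u, ξ u = ∑ i, g i u

end GHilb

namespace GHilb

variable {G : Type} [TopologicalSpace G] [MeasurableSpace G]
  {A : G → Type} [∀ x, NonUnitalNormedRing (A x)] [∀ x, StarRing (A x)]
  [∀ x, CStarRing (A x)] [∀ x, NormedSpace ℂ (A x)] [∀ x, CompleteSpace (A x)]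
  [TopologicalSpace ((x : G) × A x)]
  {S : DynSys G A}
  {E : G → Type} [∀ x, NormedAddCommGroup (E x)] [∀ x, NormedSpace ℂ (E x)]
  [∀ x, CompleteSpace (E x)] [TopologicalSpace ((x : G) × E x)]
  (H : GHilb S E)

/-- The crossed-product action
`(f·ξ)(u) = ∫ π_{r(v)}(f(v)) W_v(ξ(v⁻¹u)) dλ^{r(u)}(v)`
of `Γ_c(G; r*𝔄)` on `Γ_c(G; r*𝔈)`, for a representation `π` of the `G`-algebra `A`. -/
noncomputable def cAct (π : ∀ x, A x → (E x →L[ℂ] E x))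
    (f : (u : G) → A (S.r u)) (ξ : (u : G) → E (S.r u)) : (u : G) → E (S.r u) :=
  fun u => ∫ v, (if h : S.r v = S.r u then
      cE h (π (S.r v) (f v) (H.W v
        (cE ((S.r_mul (S.inv v) u ((S.s_inv v).trans h)).trans (S.r_inv v))
          (ξ (S.mul (S.inv v) u ((S.s_inv v).trans h))))))
    else 0) ∂(S.haar (S.r u))

end GHilb

open GHilb

/-!
Both sides equal the iterated integral
`∫_{p ∈ G^{r(u)}} ∫_{q ∈ G^{s(p)}} α_p ⟨ξ(p⁻¹), π(f^*(q)) W_q ξ'(q⁻¹p⁻¹u)⟩`.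
For `⟨ξ, f^*·ξ'⟩_G` this only needs the fibrewise pairing to be pulled inside the integral
defining `f^*·ξ'`. For `⟨f·ξ, ξ'⟩_G`, moving `π(f(w))` across the inner product as `π(f(w)^*)`,
writing it as `W_w W_{w⁻¹} π(f(w)^*)` and using the equivariance of `π`, the compatibility
`⟨W_w e, W_w e'⟩ = α_w ⟨e, e'⟩` and `α_v α_w = α_{vw}` turns the integrand at `(v, w)` into the
integrand above at `(vw, w⁻¹)`. Left invariance of the Haar system substitutes `p = vw`, the two
integrals are exchanged, and left invariance again substitutes `v = pq`.

Here `r` is an open map into `G`, so the unit space `r(G)` is open in `G`; hence every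
`r`-fiber is discrete and meets a compact set in finitely many points. Integrals over
`λ^x` of compactly supported sections are therefore finite sums, which justifies exchanging the
integrals and pulling ℝ-linear maps through them.
-/

theorem t1Space_of_locally_t2Space {X : Type*} [TopologicalSpace X]
    (h : ∀ x : X, ∃ V : Set X, x ∈ V ∧ IsOpen V ∧ T2Space V) : T1Space X := by
  refine t1Space_iff_exists_open.2 fun x y hxy => ?_
  obtain ⟨V, hxV, hV, _⟩ := h x
  by_cases hyV : y ∈ V
  · refine ⟨Subtype.val '' {⟨y, hyV⟩}ᶜ, hV.isOpenMap_subtype_val _ isOpen_compl_singleton,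
      ⟨⟨x, hxV⟩, by simpa using hxy, rfl⟩, ?_⟩
    rintro ⟨z, hz, hzy⟩
    exact hz (Subtype.ext hzy)
  · exact ⟨V, hV, hxV, hyV⟩

theorem star_real_smul {R : Type*} [NormedAddCommGroup R] [NormedSpace ℝ R] [StarAddMonoid R]
    [ContinuousStar R] (c : ℝ) (a : R) : star (c • a) = c • star a :=
  map_real_smul (starAddEquiv : R ≃+ R) continuous_star c a

theorem exists_isCompact_forall_notMem_sum_eq_zero {X : Type*} [TopologicalSpace X]
    {F : X → Type*} [∀ x, AddCommMonoid (F x)] {n : ℕ} {g : Fin n → ∀ x, F x}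
    (hg : ∀ i, ∃ K : Set X, IsCompact K ∧ ∀ x ∉ K, g i x = 0) :
    ∃ K : Set X, IsCompact K ∧ ∀ x ∉ K, ∑ i, g i x = 0 := by
  choose K hK hgK using hg
  exact ⟨⋃ i, K i, isCompact_iUnion hK, fun x hx =>
    Finset.sum_eq_zero fun i _ => hgK i x fun hxi => hx (Set.mem_iUnion.2 ⟨i, hxi⟩)⟩

section Transport

variable {G : Type} {F : G → Type} {x y z : G}

theorem DynSys.cA_heq (h : x = y) (a : F x) : HEq (cA h a) a := by
  subst h; rfl

theorem DynSys.cA_trans (h₁ : x = y) (h₂ : y = z) (a : F x) :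
    cA h₂ (cA h₁ a) = cA (h₁.trans h₂) a := by
  subst h₁ h₂; rfl

theorem DynSys.cA_zero [∀ x, Zero (F x)] (h : x = y) : cA h (0 : F x) = 0 := by
  subst h; rfl

theorem DynSys.cA_add [∀ x, Add (F x)] (h : x = y) (a b : F x) :
    cA h (a + b) = cA h a + cA h b := by
  subst h; rfl

theorem DynSys.cA_smul {R : Type*} [∀ x, SMul R (F x)] (h : x = y) (c : R) (a : F x) :
    cA h (c • a) = c • cA h a := by
  subst h; rfl

theorem GHilb.cE_heq (h : x = y) (e : F x) : HEq (cE h e) e := by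
  subst h; rfl

theorem GHilb.cE_trans (h₁ : x = y) (h₂ : y = z) (e : F x) :
    cE h₂ (cE h₁ e) = cE (h₁.trans h₂) e := by
  subst h₁ h₂; rfl

theorem GHilb.cE_zero [∀ x, Zero (F x)] (h : x = y) : cE h (0 : F x) = 0 := by
  subst h; rfl

theorem GHilb.cE_add [∀ x, Add (F x)] (h : x = y) (e e' : F x) :
    cE h (e + e') = cE h e + cE h e' := by
  subst h; rfl

theorem GHilb.cE_smul {R : Type*} [∀ x, SMul R (F x)] (h : x = y) (c : R) (e : F x) :
    cE h (c • e) = c • cE h e := by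
  subst h; rfl

theorem GHilb.cE_apply_congr {ι : G → G} (ξ : ∀ u, F (ι u)) {a b : G} (hab : a = b)
    (ha : ι a = x) (hb : ι b = x) : cE ha (ξ a) = cE hb (ξ b) := by
  subst hab; rfl

end Transport

section Representation

variable {G : Type} {A E : G → Type} [∀ x, NormedAddCommGroup (E x)] [∀ x, NormedSpace ℂ (E x)]
  (π : ∀ x, A x → (E x →L[ℂ] E x))

theorem GHilb.cE_pi {x y : G} (h : x = y) (a : A x) (e : E x) :
    cE h (π x a e) = π y (cA h a) (cE h e) := by
  subst h; rfl

theorem GHilb.pi_zero [∀ x, AddZeroClass (A x)] (hπ_add : ∀ x a b, π x (a + b) = π x a + π x b) (x : G) (e : E x) :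
    π x 0 e = 0 := by
  rw [show π x 0 = 0 by simpa using hπ_add x 0 0]
  rfl

end Representation

namespace DynSys

variable {G : Type} [TopologicalSpace G] [MeasurableSpace G]
  {A : G → Type} [∀ x, NonUnitalNormedRing (A x)] [∀ x, StarRing (A x)]
  [∀ x, CStarRing (A x)] [∀ x, NormedSpace ℂ (A x)] [∀ x, CompleteSpace (A x)]
  [TopologicalSpace ((x : G) × A x)]

theorem t1Space (S : DynSys G A) : T1Space G :=
  t1Space_of_locally_t2Space S.locallyHausdorff

theorem measurableSingletonClass (S : DynSys G A) : MeasurableSingletonClass G := by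
  have := S.borel
  have := S.t1Space
  exact ⟨fun _ => isClosed_singleton.measurableSet⟩

variable (S : DynSys G A)

theorem mul_congr {v v' w w' : G} (hv : v = v') (hw : w = w')
    (h : S.s v = S.r w) (h' : S.s v' = S.r w') : S.mul v w h = S.mul v' w' h' := by
  subst hv hw; rfl

theorem mul_eq_left_of_eq_s (u x : G) (hx : x = S.s u) (h : S.s u = S.r x) : S.mul u x h = u := by
  subst hx; exact S.mul_unit_right u

theorem mul_eq_right_of_eq_r (x u : G) (hx : x = S.r u) (h : S.s x = S.r u) : S.mul x u h = u := by
  subst hx; exact S.mul_unit_left u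

theorem inv_mul_cancel_left (v w : G) (h : S.s v = S.r w)
    (h' : S.s (S.inv v) = S.r (S.mul v w h)) : S.mul (S.inv v) (S.mul v w h) h' = w :=
  calc S.mul (S.inv v) (S.mul v w h) h'
      = S.mul (S.mul (S.inv v) v (S.s_inv v)) w (by rw [S.s_mul]; exact h) :=
        (S.mul_assoc (S.inv v) v w (S.s_inv v) h).symm
    _ = w := S.mul_eq_right_of_eq_r _ w ((S.inv_mul v).trans h) _

theorem mul_inv_cancel_left (v w : G) (h : S.s (S.inv v) = S.r w)
    (h' : S.s v = S.r (S.mul (S.inv v) w h)) : S.mul v (S.mul (S.inv v) w h) h' = w :=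
  (S.mul_congr (S.inv_inv v).symm rfl h' (by rw [S.inv_inv]; exact h')).trans
    (S.inv_mul_cancel_left (S.inv v) w h _)

theorem eq_inv_of_mul_eq_s {x y : G} (h : S.s y = S.r x) (hyx : S.mul y x h = S.s x) :
    y = S.inv x :=
  calc y = S.mul y (S.mul x (S.inv x) (S.r_inv x).symm) (by rw [S.r_mul]; exact h) :=
        (S.mul_eq_left_of_eq_s y _ (by rw [S.mul_inv, ← h]) _).symm
    _ = S.mul (S.mul y x h) (S.inv x) (by rw [S.s_mul, S.r_inv]) :=
        (S.mul_assoc y x (S.inv x) h (S.r_inv x).symm).symm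
    _ = S.inv x := by
        rw [S.mul_congr hyx rfl _ (by rw [S.r_inv, S.s_of_isUnit _ (S.s_isUnit x)])]
        exact S.mul_eq_right_of_eq_r _ _ (S.r_inv x).symm _

theorem mul_inv_rev (v w : G) (h : S.s v = S.r w) (h' : S.s (S.inv w) = S.r (S.inv v)) :
    S.inv (S.mul v w h) = S.mul (S.inv w) (S.inv v) h' := by
  refine (S.eq_inv_of_mul_eq_s (by rw [S.s_mul, S.s_inv, S.r_mul]) ?_).symm
  calc S.mul (S.mul (S.inv w) (S.inv v) h') (S.mul v w h) _
      = S.mul (S.inv w) (S.mul (S.inv v) (S.mul v w h) (by rw [S.s_inv, S.r_mul])) _ :=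
        S.mul_assoc _ _ _ h' _
    _ = S.mul (S.inv w) w (S.s_inv w) := S.mul_congr rfl (S.inv_mul_cancel_left v w h _) _ _
    _ = S.s (S.mul v w h) := by rw [S.inv_mul, S.s_mul]

theorem inv_mul_mul_eq_inv (v w : G) (h : S.s v = S.r w)
    (h' : S.s (S.inv (S.mul v w h)) = S.r v) : S.mul (S.inv (S.mul v w h)) v h' = S.inv w := by
  refine S.eq_inv_of_mul_eq_s (by rw [S.s_mul]; exact h) ?_
  calc S.mul (S.mul (S.inv (S.mul v w h)) v h') w _
      = S.mul (S.inv (S.mul v w h)) (S.mul v w h) (by rw [S.r_mul]; exact h') :=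
        S.mul_assoc _ _ _ h' h
    _ = S.s w := by rw [S.inv_mul, S.s_mul]

theorem inv_mul_inv_mul (p q u : G) (h : S.s p = S.r q) (hp : S.s (S.inv p) = S.r u)
    (hq : S.s (S.inv q) = S.r (S.mul (S.inv p) u hp))
    (hpq : S.s (S.inv (S.mul p q h)) = S.r u) :
    S.mul (S.inv q) (S.mul (S.inv p) u hp) hq = S.mul (S.inv (S.mul p q h)) u hpq := by
  have hrev : S.s (S.inv q) = S.r (S.inv p) := by rw [S.s_inv, S.r_inv]; exact h.symm
  calc S.mul (S.inv q) (S.mul (S.inv p) u hp) hq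
      = S.mul (S.mul (S.inv q) (S.inv p) hrev) u (by rw [S.s_mul]; exact hp) :=
        (S.mul_assoc _ _ _ hrev hp).symm
    _ = S.mul (S.inv (S.mul p q h)) u hpq := S.mul_congr (S.mul_inv_rev p q h hrev).symm rfl _ _

theorem isOpen_setOf_isUnit : IsOpen {x | S.isUnit x} := by
  have h : {x | S.isUnit x} = Set.range S.r :=
    Set.ext fun x => ⟨fun hx => ⟨x, S.r_of_isUnit x hx⟩, by rintro ⟨y, rfl⟩; exact S.r_isUnit y⟩
  rw [h, ← Set.image_univ]
  exact S.isOpenMap_r _ isOpen_univ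

theorem eq_of_isUnit_inv_mul {u v : G} (h : S.s (S.inv u) = S.r v)
    (hunit : S.isUnit (S.mul (S.inv u) v h)) : v = u := by
  have hs : S.mul (S.inv u) v h = S.s u := by
    rw [← S.r_of_isUnit _ hunit, S.r_mul, S.r_inv]
  calc v = S.mul u (S.mul (S.inv u) v h) (by rw [hs, S.r_of_isUnit _ (S.s_isUnit u)]) :=
        (S.mul_inv_cancel_left u v h _).symm
    _ = u := S.mul_eq_left_of_eq_s u _ hs _

theorem isDiscrete_fiber (x : G) : IsDiscrete {v | S.r v = x} := by
  refine isDiscrete_iff_discreteTopology.2 (discreteTopology_iff_isOpen_singleton.2 ?_)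
  rintro ⟨v, hv⟩
  let m : {w | S.r w = x} → G := fun w =>
    S.mul (S.inv v) w ((S.s_inv v).trans (hv.trans w.2.symm))
  have hm : Continuous m := S.continuous_mul.comp
    ((continuous_const.prodMk continuous_subtype_val).subtype_mk
      fun w => (S.s_inv v).trans (hv.trans w.2.symm))
  convert S.isOpen_setOf_isUnit.preimage hm
  refine Set.ext fun w => ⟨?_, fun hw => Subtype.ext (S.eq_of_isUnit_inv_mul _ hw)⟩
  rintro rfl
  show S.isUnit (S.mul (S.inv v) v _)
  rw [S.inv_mul]
  exact S.s_isUnit v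

theorem finite_inter_fiber {K : Set G} (hK : IsCompact K) (x : G) :
    (K ∩ {v | S.r v = x}).Finite := by
  have := S.t1Space
  exact (hK.inter_right (isClosed_singleton.preimage S.continuous_r)).finite
    ((S.isDiscrete_fiber x).mono Set.inter_subset_right)

theorem exists_isCompact_mul_mem {K₁ K₂ : Set G} (hK₁ : IsCompact K₁) (hK₂ : IsCompact K₂) :
    ∃ K : Set G, IsCompact K ∧
      ∀ v w (h : S.s v = S.r w), v ∈ K₁ → w ∈ K₂ → S.mul v w h ∈ K := by
  have := S.unitSpace_t2
  let st : G × G → {x : G // S.isUnit x} × {x : G // S.isUnit x} := fun q =>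
    (⟨S.s q.1, S.s_isUnit q.1⟩, ⟨S.r q.2, S.r_isUnit q.2⟩)
  have hst : Continuous st :=
    ((S.continuous_s.comp continuous_fst).subtype_mk _).prodMk
      ((S.continuous_r.comp continuous_snd).subtype_mk _)
  have hcomposable : IsClosed {q : G × G | S.s q.1 = S.r q.2} := by
    convert isClosed_diagonal.preimage hst
    ext q
    simp only [Set.mem_ofPred_eq, Set.mem_preimage, Set.mem_diagonal_iff, st, Subtype.ext_iff]
  have hK : IsCompact (Subtype.val ⁻¹' (K₁ ×ˢ K₂) : Set {q : G × G // S.s q.1 = S.r q.2}) := by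
    rw [Topology.IsEmbedding.subtypeVal.isCompact_iff, Set.image_preimage_eq_inter_range,
      Subtype.range_coe_subtype]
    exact (hK₁.prod hK₂).inter_right hcomposable
  exact ⟨_, hK.image S.continuous_mul, fun v w h hv hw => ⟨⟨(v, w), h⟩, ⟨hv, hw⟩, rfl⟩⟩

section Integral

variable {N : Type*} [NormedAddCommGroup N] [NormedSpace ℝ N] [CompleteSpace N]

theorem integral_haar_eq_sum {x : G} (hx : S.isUnit x) {K : Set G} (hK : IsCompact K)
    {g : G → N} (hg : ∀ v ∉ K, g v = 0) :
    ∫ v, g v ∂S.haar x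
      = ∑ p ∈ (S.finite_inter_fiber hK x).toFinset, (S.haar x).real {p} • g p := by
  have := S.measurableSingletonClass
  have := S.haar_finiteOnCompacts x
  set F := (S.finite_inter_fiber hK x).toFinset
  have hF : IntegrableOn g F (S.haar x) := by
    rw [← Set.biUnion_of_singleton (F : Set G), integrableOn_finite_biUnion F.finite_toSet]
    exact fun p _ => integrableOn_singleton (hx := isCompact_singleton.measure_lt_top)
  rw [← setIntegral_finset F hF]
  refine (setIntegral_eq_integral_of_ae_compl_eq_zero ?_).symm
  filter_upwards [(ae_iff.2 (S.haar_supported x hx) : ∀ᵐ v ∂S.haar x, S.r v = x)] with v hv hvF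
  exact hg v fun hvK => hvF (by simpa [F] using ⟨hvK, hv⟩)

theorem map_integral_haar {N' : Type*} [NormedAddCommGroup N'] [NormedSpace ℝ N']
    [CompleteSpace N'] (T : N →ₗ[ℝ] N') {x : G} (hx : S.isUnit x) {K : Set G}
    (hK : IsCompact K) {g : G → N} (hg : ∀ v ∉ K, g v = 0) :
    T (∫ v, g v ∂S.haar x) = ∫ v, T (g v) ∂S.haar x := by
  rw [S.integral_haar_eq_sum hx hK hg, S.integral_haar_eq_sum hx hK (g := fun v => T (g v))
    fun v hv => by rw [hg v hv, map_zero]]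
  simp only [map_sum, map_smul]

theorem integral_integral_haar_swap {x : G} (hx : S.isUnit x) {K₁ K₂ : Set G}
    (hK₁ : IsCompact K₁) (hK₂ : IsCompact K₂) {L : G → G → N}
    (hL₁ : ∀ v p, v ∉ K₁ → L v p = 0) (hL₂ : ∀ v p, p ∉ K₂ → L v p = 0) :
    ∫ v, ∫ p, L v p ∂S.haar x ∂S.haar x = ∫ p, ∫ v, L v p ∂S.haar x ∂S.haar x := by
  simp only [S.integral_haar_eq_sum hx hK₁ (hL₁ · _), S.integral_haar_eq_sum hx hK₂ (hL₂ _ ·)]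
  rw [S.integral_haar_eq_sum hx hK₁ (g := fun v => ∑ p ∈ _, _) fun v hv => by simp [hL₁ v _ hv],
    S.integral_haar_eq_sum hx hK₂ (g := fun p => ∑ v ∈ _, _) fun p hp => by simp [hL₂ _ p hp]]
  simp only [Finset.smul_sum]
  rw [Finset.sum_comm]
  exact Finset.sum_congr rfl fun _ _ => Finset.sum_congr rfl fun _ _ => smul_comm _ _ _

end Integral

theorem integral_haar_mul_left {v x : G} (hv : S.r v = x) (F : G → A x) :
    ∫ w, (if h : S.s v = S.r w then F (S.mul v w h) else 0) ∂S.haar (S.s v)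
      = ∫ p, F p ∂S.haar x := by
  subst hv
  exact S.haar_left_invariant v F

theorem act_zero (u : G) : S.act u 0 = 0 := by
  simpa using S.act_add u 0 0

theorem act_smul_real (u : G) (c : ℝ) (a : A (S.s u)) : S.act u (c • a) = c • S.act u a := by
  simpa only [Complex.coe_smul] using S.act_smul u c a

theorem act_cA_act (v w : G) (h : S.s v = S.r w) (a : A (S.s w)) :
    S.act v (cA h.symm (S.act w a))
      = cA (S.r_mul v w h) (S.act (S.mul v w h) (cA (S.s_mul v w h).symm a)) :=
  (S.act_comp v w h a).symm

theorem starSec_inv (f : (u : G) → A (S.r u)) (w : G) :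
    S.starSec f (S.inv w) = S.act (S.inv w) (cA (S.s_inv w).symm (star (f w))) := by
  refine congrArg (S.act (S.inv w))
    (eq_of_heq ((cA_heq _ _).trans (HEq.trans ?_ (cA_heq _ _).symm)))
  rw [S.inv_inv]

theorem starSec_eq_zero {f : (u : G) → A (S.r u)} {w : G} (h : f (S.inv w) = 0) :
    S.starSec f w = 0 := by
  rw [starSec, h, star_zero, cA_zero, act_zero]

variable {S}

theorem MemCc.exists_isCompact {f : (u : G) → A (S.r u)} (hf : S.MemCc f) :
    ∃ K : Set G, IsCompact K ∧ ∀ u ∉ K, f u = 0 := by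
  obtain ⟨n, g, hg, hfg⟩ := hf
  obtain ⟨K, hK, hgK⟩ := exists_isCompact_forall_notMem_sum_eq_zero fun i =>
    let ⟨_, _, _, _, K, _, hK, hgK⟩ := hg i; ⟨K, hK, hgK⟩
  exact ⟨K, hK, fun u hu => (hfg u).trans (hgK u hu)⟩

end DynSys

namespace GHilb

variable {G : Type} [TopologicalSpace G] [MeasurableSpace G]
  {A : G → Type} [∀ x, NonUnitalNormedRing (A x)] [∀ x, StarRing (A x)]
  [∀ x, CStarRing (A x)] [∀ x, NormedSpace ℂ (A x)] [∀ x, CompleteSpace (A x)]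
  [TopologicalSpace ((x : G) × A x)]
  {S : DynSys G A} {E : G → Type} [∀ x, NormedAddCommGroup (E x)]
  [TopologicalSpace ((x : G) × E x)]

theorem MemCcE.exists_isCompact {ξ : (u : G) → E (S.r u)} (hξ : MemCcE (S := S) (E := E) ξ) :
    ∃ K : Set G, IsCompact K ∧ ∀ u ∉ K, ξ u = 0 := by
  obtain ⟨n, g, hg, hξg⟩ := hξ
  obtain ⟨K, hK, hgK⟩ := exists_isCompact_forall_notMem_sum_eq_zero fun i =>
    let ⟨_, _, _, _, K, _, hK, hgK⟩ := hg i; ⟨K, hK, hgK⟩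
  exact ⟨K, hK, fun u hu => (hξg u).trans (hgK u hu)⟩

variable [∀ x, NormedSpace ℂ (E x)] [∀ x, CompleteSpace (E x)] (H : GHilb S E)

theorem innerE_zero_right (x : G) (e : E x) : H.innerE x e 0 = 0 := by
  simpa using H.innerE_add_right x e 0 0

theorem innerE_zero_left (x : G) (e : E x) : H.innerE x 0 e = 0 := by
  rw [← H.innerE_star, innerE_zero_right, star_zero]

theorem innerE_add_left (x : G) (a b e : E x) :
    H.innerE x (a + b) e = H.innerE x a e + H.innerE x b e := by
  rw [← H.innerE_star, H.innerE_add_right, star_add, H.innerE_star, H.innerE_star]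

theorem innerE_smul_right_real (x : G) (c : ℝ) (e a : E x) :
    H.innerE x e (c • a) = c • H.innerE x e a := by
  simpa only [Complex.coe_smul] using H.innerE_smul_right x c e a

theorem innerE_smul_left_real (x : G) (c : ℝ) (a e : E x) :
    H.innerE x (c • a) e = c • H.innerE x a e := by
  rw [← H.innerE_star, innerE_smul_right_real, star_real_smul, H.innerE_star]

theorem innerE_cE_left {x y : G} (h : x = y) (a : E x) (b : E y) :
    H.innerE y (cE h a) b = cA h (H.innerE x a (cE h.symm b)) := by
  subst h; rfl

theorem cA_innerE {x y : G} (h : x = y) (a b : E x) :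
    cA h (H.innerE x a b) = H.innerE y (cE h a) (cE h b) := by
  subst h; rfl

theorem W_heq_of_isUnit {x : G} (hx : S.isUnit x) (e : E (S.s x)) : HEq (H.W x e) e := by
  have key : ∀ y (hy : y = S.s x) (e : E (S.s y)), HEq (H.W y e) e := by
    rintro _ rfl e
    rw [H.W_unit]
    exact cast_heq _ _
  exact key x (S.s_of_isUnit x hx).symm e

theorem W_W_inv (w : G) (e : E (S.r w)) :
    H.W w (cE (S.r_inv w) (H.W (S.inv w) (cE (S.s_inv w).symm e))) = e := by
  refine (H.W_comp w (S.inv w) (S.r_inv w).symm (cE (S.s_inv w).symm e)).symm.trans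
    (eq_of_heq ((cast_heq _ _).trans ?_))
  have hunit : S.isUnit (S.mul w (S.inv w) (S.r_inv w).symm) := by
    rw [S.mul_inv]; exact S.r_isUnit w
  exact (H.W_heq_of_isUnit hunit _).trans ((cast_heq _ _).trans (cE_heq _ _))

variable (π : ∀ x, A x → (E x →L[ℂ] E x))

theorem innerE_pi_W
    (hπ_star : ∀ x a e f, H.innerE x (π x a e) f = H.innerE x e (π x (star a) f))
    (hπ_equivariant : ∀ u (a : A (S.s u)) (e : E (S.s u)),
      H.W u (π (S.s u) a e) = π (S.r u) (S.act u a) (H.W u e))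
    (w : G) (a : A (S.r w)) (e : E (S.s w)) (e' : E (S.r w)) :
    H.innerE (S.r w) (π (S.r w) a (H.W w e)) e'
      = S.act w (H.innerE (S.s w) e (cE (S.r_inv w)
          (π (S.r (S.inv w)) (S.act (S.inv w) (cA (S.s_inv w).symm (star a)))
            (H.W (S.inv w) (cE (S.s_inv w).symm e'))))) := by
  rw [hπ_star, ← H.W_W_inv w (π _ (star a) e'), H.W_inner, cE_pi, hπ_equivariant]

variable (f : (u : G) → A (S.r u)) (ξ ξ' : (u : G) → E (S.r u))

/-- `α_p ⟨ξ(p⁻¹), π(f^*(q)) W_q ξ'(y)⟩`. In use `y = q⁻¹p⁻¹u`; keeping `y` a free argument lets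
it be rewritten independently of the proofs that make the products typecheck. -/
noncomputable def pairingTerm (u p q y : G) (hp : S.r p = S.r u) (hq : S.r q = S.s p)
    (hy : S.r y = S.s q) : A (S.r u) :=
  cA hp (S.act p (H.innerE (S.s p) (cE (S.r_inv p) (ξ (S.inv p)))
    (cE hq (π (S.r q) (S.starSec f q) (H.W q (cE hy (ξ' y)))))))

theorem pairingTerm_congr (u p : G) {q q' y y' : G} (hqq : q = q') (hyy : y = y')
    (hp : S.r p = S.r u) (hq : S.r q = S.s p) (hq' : S.r q' = S.s p)
    (hy : S.r y = S.s q) (hy' : S.r y' = S.s q') :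
    H.pairingTerm π f ξ ξ' u p q y hp hq hy = H.pairingTerm π f ξ ξ' u p q' y' hp hq' hy' := by
  subst hqq hyy; rfl

noncomputable def pairing (u p q : G) : A (S.r u) :=
  if hp : S.r p = S.r u then
    if hq : S.r q = S.s p then
      H.pairingTerm π f ξ ξ' u p q
        (S.mul (S.inv q) (S.mul (S.inv p) u ((S.s_inv p).trans hp))
          (by rw [S.s_inv, S.r_mul, S.r_inv]; exact hq))
        hp hq (by rw [S.r_mul, S.r_inv])
    else 0
  else 0

noncomputable def pairingIntegral (u : G) : A (S.r u) :=
  ∫ p, ∫ q, H.pairing π f ξ ξ' u p q ∂S.haar (S.s p) ∂S.haar (S.r u)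

/-- The integrand of `⟨f·ξ, ξ'⟩_G(u)` after unfolding `f·ξ` and substituting `p = vw`. -/
noncomputable def leftIntegrand (u v p : G) : A (S.r u) :=
  if h : S.r p = S.r v then H.pairing π f ξ ξ' u p (S.mul (S.inv p) v ((S.s_inv p).trans h))
  else 0

theorem pairing_eq_zero_of_r_ne {u p : G} (hp : S.r p ≠ S.r u) (q : G) :
    H.pairing π f ξ ξ' u p q = 0 :=
  dif_neg hp

theorem pairing_eq_zero_of_r_ne_s {u p q : G} (hq : S.r q ≠ S.s p) :
    H.pairing π f ξ ξ' u p q = 0 := by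
  unfold pairing
  split_ifs <;> rfl

theorem pairing_eq_zero_of_left {u p : G} (hξ : ξ (S.inv p) = 0) (q : G) :
    H.pairing π f ξ ξ' u p q = 0 := by
  unfold pairing pairingTerm
  split_ifs <;> simp only [hξ, cE_zero, innerE_zero_left, S.act_zero, cA_zero]

theorem pairing_eq_zero_of_right (hπ_add : ∀ x a b, π x (a + b) = π x a + π x b)
    {u q : G} (hf : f (S.inv q) = 0) (p : G) : H.pairing π f ξ ξ' u p q = 0 := by
  unfold pairing pairingTerm
  split_ifs <;> simp only [S.starSec_eq_zero hf, pi_zero π hπ_add, cE_zero,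
    innerE_zero_right, S.act_zero, cA_zero]

theorem innerG_cAct_starSec_apply_eq_pairingIntegral
    (hπ_add : ∀ x a b, π x (a + b) = π x a + π x b)
    {K : Set G} (hK : IsCompact K) (hfK : ∀ v ∉ K, f v = 0) (u : G) :
    H.innerG ξ (H.cAct π (S.starSec f) ξ') u = H.pairingIntegral π f ξ ξ' u := by
  refine congrArg (integral (S.haar (S.r u))) (funext fun v => ?_)
  by_cases h1 : S.r v = S.r u
  swap
  · simp only [dif_neg h1, H.pairing_eq_zero_of_r_ne π f ξ ξ' h1, integral_zero]
  rw [dif_pos h1]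
  set m := S.mul (S.inv v) u ((S.s_inv v).trans h1)
  have hm : S.r m = S.s v := (S.r_mul _ _ _).trans (S.r_inv v)
  let T : E (S.r m) →ₗ[ℝ] A (S.r u) :=
    { toFun := fun e =>
        cA h1 (S.act v (H.innerE (S.s v) (cE (S.r_inv v) (ξ (S.inv v))) (cE hm e)))
      map_add' := fun a b => by simp only [cE_add, H.innerE_add_right, S.act_add, cA_add]
      map_smul' := fun c a => by
        simp only [cE_smul, H.innerE_smul_right_real, S.act_smul_real, cA_smul,
          RingHom.id_apply] }
  have hvanish (w : G) (hw : w ∉ S.inv '' K) : S.starSec f w = 0 :=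
    S.starSec_eq_zero (hfK _ fun h => hw ⟨_, h, S.inv_inv w⟩)
  change T (∫ w, _ ∂S.haar (S.r m)) = _
  rw [S.map_integral_haar T (S.r_isUnit m) (hK.image S.continuous_inv) fun w hw => by
      split_ifs <;> simp [hvanish w hw, pi_zero π hπ_add, cE_zero],
    show S.haar (S.r m) = S.haar (S.s v) by rw [hm]]
  refine congrArg (integral _) (funext fun w => ?_)
  by_cases h2 : S.r w = S.s v
  · rw [dif_pos (h2.trans hm.symm)]
    unfold pairing
    rw [dif_pos h1, dif_pos h2]
    change cA h1 (S.act v (H.innerE (S.s v) _ (cE hm (cE _ _)))) = _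
    rw [cE_trans]
    rfl
  · rw [dif_neg fun h => h2 (h.trans hm), map_zero, H.pairing_eq_zero_of_r_ne_s π f ξ ξ' h2]

theorem leftIntegrand_mul {u v : G} (h1 : S.r v = S.r u) (w : G) (h2 : S.s v = S.r w) :
    H.leftIntegrand π f ξ ξ' u v (S.mul v w h2)
      = H.pairingTerm π f ξ ξ' u (S.mul v w h2) (S.inv w)
          (S.mul (S.inv v) u ((S.s_inv v).trans h1)) ((S.r_mul v w h2).trans h1)
          (by rw [S.r_inv, S.s_mul]) (by rw [S.r_mul, S.r_inv, S.s_inv]; exact h2) := by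
  unfold leftIntegrand pairing
  rw [dif_pos (S.r_mul v w h2), dif_pos ((S.r_mul v w h2).trans h1),
    dif_pos (by rw [S.r_mul, S.r_inv])]
  refine H.pairingTerm_congr π f ξ ξ' _ _ (S.inv_mul_mul_eq_inv v w h2 _) ?_ _ _ _ _ _
  exact (S.inv_mul_inv_mul _ _ u (by rw [S.r_mul, S.r_inv]) _ _
      (by rw [S.s_inv, S.r_mul, S.r_mul]; exact h1)).trans
    (S.mul_congr (congrArg S.inv (S.mul_inv_cancel_left _ _ _ _)) rfl _ _)

theorem act_innerE_pi_W_eq_pairingTerm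
    (hπ_star : ∀ x a e f, H.innerE x (π x a e) f = H.innerE x e (π x (star a) f))
    (hπ_equivariant : ∀ u (a : A (S.s u)) (e : E (S.s u)),
      H.W u (π (S.s u) a e) = π (S.r u) (S.act u a) (H.W u e))
    {u v : G} (h1 : S.r v = S.r u) (w : G) (h2 : S.s v = S.r w) (hw : S.r w = S.r (S.inv v)) :
    cA h1 (S.act v (H.innerE (S.s v)
      (cE (S.r_inv v) (cE hw (π (S.r w) (f w) (H.W w
        (cE ((S.r_mul (S.inv w) (S.inv v) ((S.s_inv w).trans hw)).trans (S.r_inv w))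
          (ξ (S.mul (S.inv w) (S.inv v) ((S.s_inv w).trans hw))))))))
      (cE ((S.r_mul (S.inv v) u ((S.s_inv v).trans h1)).trans (S.r_inv v))
        (ξ' (S.mul (S.inv v) u ((S.s_inv v).trans h1))))))
      = H.pairingTerm π f ξ ξ' u (S.mul v w h2) (S.inv w)
          (S.mul (S.inv v) u ((S.s_inv v).trans h1)) ((S.r_mul v w h2).trans h1)
          (by rw [S.r_inv, S.s_mul]) (by rw [S.r_mul, S.r_inv, S.s_inv]; exact h2) := by
  rw [cE_trans, H.innerE_cE_left, H.innerE_pi_W π hπ_star hπ_equivariant, ← S.starSec_inv,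
    S.act_cA_act v w h2, cA_trans, H.cA_innerE, cE_trans, cE_trans, cE_trans, cE_trans,
    cE_apply_congr ξ (S.mul_inv_rev v w h2 ((S.s_inv w).trans hw)).symm _ (S.r_inv _)]
  rfl

theorem leftIntegrand_eq_zero_of_r_ne {u v : G} (h1 : S.r v ≠ S.r u) (p : G) :
    H.leftIntegrand π f ξ ξ' u v p = 0 := by
  unfold leftIntegrand
  split_ifs with h
  exacts [H.pairing_eq_zero_of_r_ne π f ξ ξ' (fun hp => h1 (h.symm.trans hp)) _, rfl]

theorem innerG_cAct_apply_eq_integral_leftIntegrand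
    (hπ_add : ∀ x a b, π x (a + b) = π x a + π x b)
    (hπ_star : ∀ x a e f, H.innerE x (π x a e) f = H.innerE x e (π x (star a) f))
    (hπ_equivariant : ∀ u (a : A (S.s u)) (e : E (S.s u)),
      H.W u (π (S.s u) a e) = π (S.r u) (S.act u a) (H.W u e))
    {K : Set G} (hK : IsCompact K) (hfK : ∀ v ∉ K, f v = 0) (u : G) :
    H.innerG (H.cAct π f ξ) ξ' u
      = ∫ v, ∫ p, H.leftIntegrand π f ξ ξ' u v p ∂S.haar (S.r u) ∂S.haar (S.r u) := by
  refine congrArg (integral (S.haar (S.r u))) (funext fun v => ?_)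
  by_cases h1 : S.r v = S.r u
  swap
  · simp only [dif_neg h1, H.leftIntegrand_eq_zero_of_r_ne π f ξ ξ' h1, integral_zero]
  rw [dif_pos h1]
  set m := S.mul (S.inv v) u ((S.s_inv v).trans h1)
  have hm : S.r m = S.s v := (S.r_mul _ _ _).trans (S.r_inv v)
  let T : E (S.r (S.inv v)) →ₗ[ℝ] A (S.r u) :=
    { toFun := fun e => cA h1 (S.act v (H.innerE (S.s v) (cE (S.r_inv v) e) (cE hm (ξ' m))))
      map_add' := fun a b => by simp only [cE_add, H.innerE_add_left, S.act_add, cA_add]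
      map_smul' := fun c a => by
        simp only [cE_smul, H.innerE_smul_left_real, S.act_smul_real, cA_smul,
          RingHom.id_apply] }
  change T (∫ w, _ ∂S.haar (S.r (S.inv v))) = _
  rw [S.map_integral_haar T (S.r_isUnit _) hK fun w hw => by
      split_ifs <;> simp [hfK w hw, pi_zero π hπ_add, cE_zero],
    show S.haar (S.r (S.inv v)) = S.haar (S.s v) by rw [S.r_inv], ← S.integral_haar_mul_left h1]
  refine congrArg (integral _) (funext fun w => ?_)
  by_cases h2 : S.s v = S.r w
  · rw [dif_pos (h2.symm.trans (S.r_inv v).symm), dif_pos h2,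
      H.leftIntegrand_mul π f ξ ξ' h1 w h2]
    exact H.act_innerE_pi_W_eq_pairingTerm π f ξ ξ' hπ_star hπ_equivariant h1 w h2 _
  · rw [dif_neg fun h => h2 (h.trans (S.r_inv v)).symm, dif_neg h2, map_zero]

theorem integral_leftIntegrand (u p : G) :
    ∫ v, H.leftIntegrand π f ξ ξ' u v p ∂S.haar (S.r u)
      = ∫ q, H.pairing π f ξ ξ' u p q ∂S.haar (S.s p) := by
  by_cases hp : S.r p = S.r u
  swap
  · have : ∀ v, H.leftIntegrand π f ξ ξ' u v p = 0 := fun v => by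
      unfold leftIntegrand
      split_ifs <;> simp only [H.pairing_eq_zero_of_r_ne π f ξ ξ' hp]
    simp only [this, H.pairing_eq_zero_of_r_ne π f ξ ξ' hp, integral_zero]
  rw [← S.integral_haar_mul_left hp]
  refine congrArg (integral _) (funext fun q => ?_)
  by_cases hq : S.s p = S.r q
  · rw [dif_pos hq]
    unfold leftIntegrand
    rw [dif_pos (S.r_mul p q hq).symm]
    exact congrArg _ (S.inv_mul_cancel_left p q hq _)
  · rw [dif_neg hq, H.pairing_eq_zero_of_r_ne_s π f ξ ξ' fun h => hq h.symm]

theorem leftIntegrand_eq_zero_of_notMem (hπ_add : ∀ x a b, π x (a + b) = π x a + π x b)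
    {Kf Kξ K : Set G} (hfK : ∀ v ∉ Kf, f v = 0) (hξK : ∀ v ∉ Kξ, ξ v = 0)
    (hK : ∀ p q (h : S.s p = S.r q), p ∈ S.inv '' Kξ → q ∈ S.inv '' Kf → S.mul p q h ∈ K)
    (u : G) {v : G} (hv : v ∉ K) (p : G) : H.leftIntegrand π f ξ ξ' u v p = 0 := by
  unfold leftIntegrand
  split_ifs with h
  · by_cases hξp : ξ (S.inv p) = 0
    · exact H.pairing_eq_zero_of_left π f ξ ξ' hξp _
    by_cases hfq : f (S.inv (S.mul (S.inv p) v ((S.s_inv p).trans h))) = 0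
    · exact H.pairing_eq_zero_of_right π f ξ ξ' hπ_add hfq _
    refine absurd ?_ hv
    rw [← S.mul_inv_cancel_left p v ((S.s_inv p).trans h) (by rw [S.r_mul, S.r_inv])]
    exact hK _ _ _ ⟨_, by_contra fun h => hξp (hξK _ h), S.inv_inv p⟩
      ⟨_, by_contra fun h => hfq (hfK _ h), S.inv_inv _⟩
  · rfl

theorem innerG_cAct_apply_eq_pairingIntegral (hπ_add : ∀ x a b, π x (a + b) = π x a + π x b)
    (hπ_star : ∀ x a e f, H.innerE x (π x a e) f = H.innerE x e (π x (star a) f))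
    (hπ_equivariant : ∀ u (a : A (S.s u)) (e : E (S.s u)),
      H.W u (π (S.s u) a e) = π (S.r u) (S.act u a) (H.W u e))
    {Kf Kξ : Set G} (hKf : IsCompact Kf) (hfK : ∀ v ∉ Kf, f v = 0)
    (hKξ : IsCompact Kξ) (hξK : ∀ v ∉ Kξ, ξ v = 0) (u : G) :
    H.innerG (H.cAct π f ξ) ξ' u = H.pairingIntegral π f ξ ξ' u := by
  obtain ⟨K, hK, hKmem⟩ :=
    S.exists_isCompact_mul_mem (hKξ.image S.continuous_inv) (hKf.image S.continuous_inv)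
  rw [H.innerG_cAct_apply_eq_integral_leftIntegrand π f ξ ξ' hπ_add hπ_star hπ_equivariant hKf
      hfK u,
    S.integral_integral_haar_swap (S.r_isUnit u) hK (hKξ.image S.continuous_inv)
      (fun v p hv => H.leftIntegrand_eq_zero_of_notMem π f ξ ξ' hπ_add hfK hξK hKmem u hv p)
      fun v p hp => ?_]
  · exact congrArg (integral _) (funext (H.integral_leftIntegrand π f ξ ξ' u))
  · unfold leftIntegrand
    split_ifs
    exacts [H.pairing_eq_zero_of_left π f ξ ξ' (hξK _ fun h => hp ⟨_, h, S.inv_inv p⟩) _, rfl]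

end GHilb

theorem cAct_star_compatible_general {G : Type} [TopologicalSpace G] [MeasurableSpace G]
    {A : G → Type} [∀ x, NonUnitalNormedRing (A x)] [∀ x, StarRing (A x)]
    [∀ x, CStarRing (A x)] [∀ x, NormedSpace ℂ (A x)] [∀ x, CompleteSpace (A x)]
    [TopologicalSpace ((x : G) × A x)]
    {S : DynSys G A}
    {E : G → Type} [∀ x, NormedAddCommGroup (E x)] [∀ x, NormedSpace ℂ (E x)]
    [∀ x, CompleteSpace (E x)] [TopologicalSpace ((x : G) × E x)]
    (H : GHilb S E)
    (π : ∀ x, A x → (E x →L[ℂ] E x))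
    (hπ_add : ∀ x a b, π x (a + b) = π x a + π x b)
    (hπ_star : ∀ x a e f, H.innerE x (π x a e) f = H.innerE x e (π x (star a) f))
    (hπ_equivariant : ∀ u (a : A (S.s u)) (e : E (S.s u)),
      H.W u (π (S.s u) a e) = π (S.r u) (S.act u a) (H.W u e))
    (f : (u : G) → A (S.r u)) (hf : S.MemCc f)
    (ξ ξ' : (u : G) → E (S.r u))
    (hξ : GHilb.MemCcE (S := S) (E := E) ξ) :
    H.innerG (H.cAct π f ξ) ξ' = H.innerG ξ (H.cAct π (S.starSec f) ξ') := by
  obtain ⟨Kf, hKf, hfK⟩ := hf.exists_isCompact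
  obtain ⟨Kξ, hKξ, hξK⟩ := hξ.exists_isCompact
  funext u
  rw [H.innerG_cAct_apply_eq_pairingIntegral π f ξ ξ' hπ_add hπ_star hπ_equivariant hKf hfK
      hKξ hξK,
    H.innerG_cAct_starSec_apply_eq_pairingIntegral π f ξ ξ' hπ_add hKf hfK]

/-- Let `π : A → L(E)` be a `G`-equivariant representation of a `G`-algebra
`A` on a `G`-Hilbert `B`-module `(E, W)`.  Then the crossed-product action
`(f·ξ)(u) = ∫ π_{r(v)}(f(v)) W_v(ξ(v⁻¹u)) dλ^{r(u)}(v)` is *-compatible with the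
convolution involution: `⟨f·ξ, ξ'⟩_G = ⟨ξ, f^*·ξ'⟩_G` for all `f ∈ Γ_c(G; r*𝔄)` and
`ξ, ξ' ∈ Γ_c(G; r*𝔈)`. -/
theorem cAct_star_compatible {G : Type} [TopologicalSpace G] [MeasurableSpace G]
    {A : G → Type} [∀ x, NonUnitalNormedRing (A x)] [∀ x, StarRing (A x)]
    [∀ x, CStarRing (A x)] [∀ x, NormedSpace ℂ (A x)] [∀ x, CompleteSpace (A x)]
    [TopologicalSpace ((x : G) × A x)]
    {S : DynSys G A}
    {E : G → Type} [∀ x, NormedAddCommGroup (E x)] [∀ x, NormedSpace ℂ (E x)]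
    [∀ x, CompleteSpace (E x)] [TopologicalSpace ((x : G) × E x)]
    (H : GHilb S E)
    (π : ∀ x, A x → (E x →L[ℂ] E x))
    (hπ_add : ∀ x a b, π x (a + b) = π x a + π x b)
    (hπ_mul : ∀ x a b, π x (a * b) = π x a ∘L π x b)
    (hπ_smul : ∀ x (c : ℂ) a, π x (c • a) = c • π x a)
    (hπ_star : ∀ x a e f, H.innerE x (π x a e) f = H.innerE x e (π x (star a) f))
    (hπ_mo : ∀ x a e b, π x a (H.mo x e b) = H.mo x (π x a e) b)
    (hπ_equivariant : ∀ u (a : A (S.s u)) (e : E (S.s u)),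
      H.W u (π (S.s u) a e) = π (S.r u) (S.act u a) (H.W u e))
    (f : (u : G) → A (S.r u)) (hf : S.MemCc f)
    (ξ ξ' : (u : G) → E (S.r u))
    (hξ : GHilb.MemCcE (S := S) (E := E) ξ) (hξ' : GHilb.MemCcE (S := S) (E := E) ξ') :
    H.innerG (H.cAct π f ξ) ξ' = H.innerG ξ (H.cAct π (S.starSec f) ξ') :=
  cAct_star_compatible_general H π hπ_add hπ_star hπ_equivariant f hf ξ ξ' hξ
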